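/- Let a > b > 0. For any triangle P₁P₂P₃ inscribed in the circle of radius a + b centered at the origin whose three side lines are each tangent to the concentric ellipse x²/a² + y²/b² = 1 (i.e., each side lies on a line {(x,y) : p·x + q·y = 1} with a²p² + b²q² = 1), the product of the cosines of its three interior angles equals a*b/(2*(a+b)²). -/

import Mathlib

open EuclideanGeometry

/-- The line through `P` and `Q` is tangent to the ellipse `x²/a² + y²/b² = 1`:
it lies on a line `{(x,y) : p·x + q·y = 1}` with `a²p² + b²q² = 1`. -/
def SideTangentToEllipse (a b : ℝ) (P Q : EuclideanSpace ℝ (Fin 2)) : Prop :=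
  ∃ p q : ℝ, a ^ 2 * p ^ 2 + b ^ 2 * q ^ 2 = 1 ∧
    p * P 0 + q * P 1 = 1 ∧ p * Q 0 + q * Q 1 = 1

/-!
In any triangle `cos² A + cos² B + cos² C + 2 cos A cos B cos C = 1`, and with the circumcentre at
the origin the inscribed angle theorem gives `2 cos² A - 1 = ⟪P₂, P₃⟫ / R²`; together these give
Euler's relation `8 R² cos A cos B cos C = R² - ‖P₁ + P₂ + P₃‖²`.

Now view the vertices as complex numbers `zᵢ` with `|zᵢ| = R = a + b`. If a chord `zw` is tangent
to the ellipse, a symmetric biquadratic `E(z, w)` vanishes. Fixing `z₁`, the other two vertices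
are the two roots of the quadratic `E(z₁, ·)`, and Vieta's formulas give
`z₁z₂ + z₂z₃ + z₃z₁ = -(a² - b²)`, a constant precisely because `R = a + b`. Since `zᵢ z̄ᵢ = R²`,
`|z₁z₂ + z₂z₃ + z₃z₁| = R |z₁ + z₂ + z₃|`, so `‖P₁ + P₂ + P₃‖ = a - b` and the product of the
cosines is `(R² - (a - b)²) / (8 R²) = ab / (2 R²)`.
-/

theorem Real.cos_sq_add_cos_sq_add_cos_sq_of_add_add_eq_pi {x y z : ℝ} (h : x + y + z = Real.pi) :
    cos x ^ 2 + cos y ^ 2 + cos z ^ 2 + 2 * cos x * cos y * cos z = 1 := by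
  obtain rfl : z = Real.pi - (x + y) := by linarith
  rw [cos_pi_sub, cos_add]
  linear_combination sin y ^ 2 * sin_sq_add_cos_sq x + (1 - cos x ^ 2) * sin_sq_add_cos_sq y

section TwoDimensional

variable {V : Type*} [NormedAddCommGroup V] [InnerProductSpace ℝ V]
  [Fact (Module.finrank ℝ V = 2)]

theorem InnerProductGeometry.cos_angle_eq_cos_two_mul_angle_sub_of_norm_eq {x y z : V}
    (hxy : x ≠ y) (hxz : x ≠ z) (hy : ‖x‖ = ‖y‖) (hz : ‖x‖ = ‖z‖) :
    Real.cos (angle y z) = Real.cos (2 * angle (y - x) (z - x)) := by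
  have : FiniteDimensional ℝ V := .of_fact_finrank_eq_two
  let o : Orientation ℝ V (Fin 2) := (Module.finBasisOfFinrankEq ℝ V Fact.out).orientation
  have ne_zero : ∀ {w : V}, ‖x‖ = ‖w‖ → x ≠ w → w ≠ 0 := by
    rintro w hw hxw rfl
    exact hxw (norm_eq_zero.mp (hw.trans norm_zero))
  have hcos := o.cos_oangle_eq_cos_angle (sub_ne_zero.mpr hxy.symm) (sub_ne_zero.mpr hxz.symm)
  have hpyth := Real.Angle.cos_sq_add_sin_sq (o.oangle (y - x) (z - x))
  rw [← o.cos_oangle_eq_cos_angle (ne_zero hy hxy) (ne_zero hz hxz),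
    o.oangle_eq_two_zsmul_oangle_sub_of_norm_eq hxy hxz hy hz, two_zsmul, Real.Angle.cos_add,
    Real.cos_two_mul, ← hcos]
  linear_combination -hpyth

namespace EuclideanGeometry

theorem inner_eq_sq_mul_cos_two_mul_angle_of_norm_eq {x y z : V} (hxy : x ≠ y) (hxz : x ≠ z)
    (hy : ‖x‖ = ‖y‖) (hz : ‖x‖ = ‖z‖) :
    inner ℝ y z = ‖x‖ ^ 2 * Real.cos (2 * ∠ y x z) := by
  rw [angle, vsub_eq_sub, vsub_eq_sub,
    ← InnerProductGeometry.cos_angle_eq_cos_two_mul_angle_sub_of_norm_eq hxy hxz hy hz,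
    ← InnerProductGeometry.cos_angle_mul_norm_mul_norm, ← hy, ← hz]
  ring

theorem eight_mul_sq_mul_cos_mul_cos_mul_cos_of_norm_eq {R : ℝ} {p₁ p₂ p₃ : V}
    (h₁ : ‖p₁‖ = R) (h₂ : ‖p₂‖ = R) (h₃ : ‖p₃‖ = R)
    (h₁₂ : p₁ ≠ p₂) (h₁₃ : p₁ ≠ p₃) (h₂₃ : p₂ ≠ p₃) :
    8 * R ^ 2 * (Real.cos (∠ p₂ p₁ p₃) * Real.cos (∠ p₁ p₂ p₃) * Real.cos (∠ p₁ p₃ p₂)) =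
      R ^ 2 - ‖p₁ + p₂ + p₃‖ ^ 2 := by
  have h₂₃' := inner_eq_sq_mul_cos_two_mul_angle_of_norm_eq h₁₂ h₁₃ (h₁.trans h₂.symm)
    (h₁.trans h₃.symm)
  have h₁₃' := inner_eq_sq_mul_cos_two_mul_angle_of_norm_eq h₁₂.symm h₂₃ (h₂.trans h₁.symm)
    (h₂.trans h₃.symm)
  have h₁₂' := inner_eq_sq_mul_cos_two_mul_angle_of_norm_eq h₁₃.symm h₂₃.symm (h₃.trans h₁.symm)
    (h₃.trans h₂.symm)
  rw [h₁, Real.cos_two_mul] at h₂₃'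
  rw [h₂, Real.cos_two_mul] at h₁₃'
  rw [h₃, Real.cos_two_mul] at h₁₂'
  have hsum : ∠ p₂ p₁ p₃ + ∠ p₁ p₂ p₃ + ∠ p₁ p₃ p₂ = Real.pi := by
    rw [angle_comm p₂ p₁ p₃, angle_comm p₁ p₃ p₂]
    linarith [angle_add_angle_add_angle_eq_pi p₃ h₁₂.symm]
  have hcos := Real.cos_sq_add_cos_sq_add_cos_sq_of_add_add_eq_pi hsum
  rw [norm_add_sq_real, norm_add_sq_real, inner_add_left, h₁, h₂, h₃]
  linear_combination 4 * R ^ 2 * hcos + 2 * h₂₃' + 2 * h₁₃' + 2 * h₁₂'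

end EuclideanGeometry

end TwoDimensional

/-- Vanishes when `|z| = |w| = R` and the chord `zw` of the circle lies on a line tangent to the
ellipse `x²/a² + y²/b² = 1` (`Complex.tangentChordPoly_eq_zero`). -/
def tangentChordPoly {K : Type*} [CommRing K] (a b R z w : K) : K :=
  (a ^ 2 - b ^ 2) * (z ^ 2 * w ^ 2 + R ^ 4) + 2 * (a ^ 2 + b ^ 2) * R ^ 2 * z * w
    - R ^ 4 * (z + w) ^ 2

theorem tangentChordPoly_comm {K : Type*} [CommRing K] (a b R z w : K) :
    tangentChordPoly a b R z w = tangentChordPoly a b R w z := by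
  unfold tangentChordPoly
  ring

theorem mul_add_mul_add_mul_eq_of_tangentChordPoly_eq_zero {K : Type*} [Field K] {a b x y z : K}
    (hx : (a ^ 2 - b ^ 2) * x ^ 2 ≠ (a + b) ^ 4)
    (hy : tangentChordPoly a b (a + b) x y = 0) (hz : tangentChordPoly a b (a + b) x z = 0)
    (hyz : y ≠ z) :
    x * y + y * z + z * x = -(a ^ 2 - b ^ 2) := by
  unfold tangentChordPoly at hy hz
  set A := (a ^ 2 - b ^ 2) * x ^ 2 - (a + b) ^ 4
  have hsum : A * (y + z) = 4 * a * b * (a + b) ^ 2 * x :=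
    mul_left_cancel₀ (sub_ne_zero.2 hyz) (by linear_combination hy - hz)
  have hprod : A * (y * z) = (a + b) ^ 4 * ((a ^ 2 - b ^ 2) - x ^ 2) := by
    linear_combination y * hsum - hy
  exact mul_left_cancel₀ (sub_ne_zero.2 hx) (by linear_combination x * hsum + hprod)

namespace Complex

open ComplexConjugate

theorem tangentChordPoly_eq_zero {a b p q R : ℝ} {z w : ℂ} (hz : ‖z‖ = R) (hw : ‖w‖ = R)
    (hzw : z ≠ w) (htan : a ^ 2 * p ^ 2 + b ^ 2 * q ^ 2 = 1)
    (hlz : p * z.re + q * z.im = 1) (hlw : p * w.re + q * w.im = 1) :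
    tangentChordPoly (a : ℂ) b R z w = 0 := by
  set ω : ℂ := ⟨p, q⟩
  have line : ∀ {v : ℂ}, p * v.re + q * v.im = 1 → conj ω * v + ω * conj v = 2 := by
    intro v hv
    apply Complex.ext
    · simp [ω]; linear_combination 2 * hv
    · simp [ω]; ring
  have hT : (a ^ 2 - b ^ 2) * (ω ^ 2 + conj ω ^ 2) + 2 * (a ^ 2 + b ^ 2) * ω * conj ω = 4 := by
    apply Complex.ext
    · simp [ω, pow_two]; linear_combination 4 * htan
    · simp [ω, pow_two]; ring
  have hz' : z * conj z = (R : ℂ) ^ 2 := hz ▸ mul_conj' z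
  have hw' : w * conj w = (R : ℂ) ^ 2 := hw ▸ mul_conj' w
  have hlz' := line hlz
  have hlw' := line hlw
  have hz0 : z ≠ 0 := by
    rintro rfl
    simp at hlz
  -- `conj ω = 2 / (z + w)` and `ω = 2 z w / (R² (z + w))`; substitute into `hT`.
  have h1 : conj ω * (z * w) = ω * R ^ 2 :=
    mul_left_cancel₀ (sub_ne_zero.2 hzw)
      (by linear_combination z * w * (hlz' - hlw') - ω * (w * hz' - z * hw'))
  have h2 : conj ω * (z + w) = 2 :=
    mul_left_cancel₀ hz0 (by linear_combination z * hlz' - ω * hz' + h1)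
  have hU : ω * R ^ 2 * (z + w) = 2 * z * w := by
    linear_combination z * w * h2 - (z + w) * h1
  unfold tangentChordPoly
  linear_combination (R ^ 4 * (z + w) ^ 2 * hT
    - (a ^ 2 - b ^ 2) * (ω * R ^ 2 * (z + w) + 2 * z * w) * hU
    - (a ^ 2 - b ^ 2) * R ^ 4 * (conj ω * (z + w) + 2) * h2
    - 2 * (a ^ 2 + b ^ 2) * R ^ 2 * (conj ω * (z + w) * hU + 2 * z * w * h2)) / 4

theorem norm_mul_add_mul_add_mul_eq_mul_norm_add_add {z₁ z₂ z₃ : ℂ} {R : ℝ}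
    (h₁ : ‖z₁‖ = R) (h₂ : ‖z₂‖ = R) (h₃ : ‖z₃‖ = R) :
    ‖z₁ * z₂ + z₂ * z₃ + z₃ * z₁‖ = R * ‖z₁ + z₂ + z₃‖ := by
  have key : (z₁ * z₂ + z₂ * z₃ + z₃ * z₁) * R ^ 2 = z₁ * z₂ * z₃ * conj (z₁ + z₂ + z₃) := by
    have e₁ : z₁ * conj z₁ = (R : ℂ) ^ 2 := h₁ ▸ mul_conj' z₁
    have e₂ : z₂ * conj z₂ = (R : ℂ) ^ 2 := h₂ ▸ mul_conj' z₂
    have e₃ : z₃ * conj z₃ = (R : ℂ) ^ 2 := h₃ ▸ mul_conj' z₃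
    simp only [map_add]
    linear_combination -(z₂ * z₃ * e₁ + z₁ * z₃ * e₂ + z₁ * z₂ * e₃)
  have := congrArg norm key
  simp only [norm_mul, norm_pow, norm_real, norm_conj, h₁, h₂, h₃, Real.norm_eq_abs, sq_abs]
    at this
  rcases (h₁ ▸ norm_nonneg z₁ : 0 ≤ R).eq_or_lt with rfl | hR
  · simp_all
  · exact mul_right_cancel₀ (pow_pos hR 2).ne' (by linear_combination this)

theorem sq_sub_sq_mul_sq_ne_add_pow_four {a b : ℝ} (ha : 0 < a) (hb : 0 < b) {x : ℂ}
    (hx : ‖x‖ = a + b) : (a ^ 2 - b ^ 2) * x ^ 2 ≠ ((a + b) ^ 4 : ℂ) := by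
  intro h
  have := congrArg norm h
  norm_cast at this
  have hR : 0 < a + b := by positivity
  simp only [norm_mul, norm_pow, hx, norm_real, Real.norm_eq_abs, abs_of_pos hR] at this
  have habs : |a ^ 2 - b ^ 2| = (a + b) ^ 2 :=
    mul_right_cancel₀ (pow_pos hR 2).ne' (by linear_combination this)
  cases abs_cases (a ^ 2 - b ^ 2) <;> nlinarith

theorem norm_add_add_eq_sub_of_tangentChordPoly_eq_zero {a b : ℝ} (hb : 0 < b) (hab : b < a)
    {z₁ z₂ z₃ : ℂ} (h₁ : ‖z₁‖ = a + b) (h₂ : ‖z₂‖ = a + b) (h₃ : ‖z₃‖ = a + b)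
    (h₁₂ : tangentChordPoly (a : ℂ) b (a + b : ℝ) z₁ z₂ = 0)
    (h₁₃ : tangentChordPoly (a : ℂ) b (a + b : ℝ) z₁ z₃ = 0) (h₂₃ : z₂ ≠ z₃) :
    ‖z₁ + z₂ + z₃‖ = a - b := by
  push_cast at h₁₂ h₁₃
  have hσ := mul_add_mul_add_mul_eq_of_tangentChordPoly_eq_zero
    (sq_sub_sq_mul_sq_ne_add_pow_four (hb.trans hab) hb h₁) h₁₂ h₁₃ h₂₃
  have hnorm := norm_mul_add_mul_add_mul_eq_mul_norm_add_add h₁ h₂ h₃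
  rw [hσ, norm_neg, ← ofReal_pow, ← ofReal_pow, ← ofReal_sub, norm_real,
    Real.norm_eq_abs, abs_of_pos (by nlinarith)] at hnorm
  exact mul_left_cancel₀ (by linarith : a + b ≠ 0) (by linear_combination -hnorm)

end Complex

theorem SideTangentToEllipse.tangentChordPoly_eq_zero {a b R : ℝ}
    {P Q : EuclideanSpace ℝ (Fin 2)} (h : SideTangentToEllipse a b P Q)
    (hP : ‖P‖ = R) (hQ : ‖Q‖ = R) (hPQ : P ≠ Q) :
    tangentChordPoly (a : ℂ) b R (Complex.orthonormalBasisOneI.repr.symm P)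
      (Complex.orthonormalBasisOneI.repr.symm Q) = 0 := by
  obtain ⟨p, q, htan, hlP, hlQ⟩ := h
  exact Complex.tangentChordPoly_eq_zero (by rwa [LinearIsometryEquiv.norm_map])
    (by rwa [LinearIsometryEquiv.norm_map])
    (Complex.orthonormalBasisOneI.repr.symm.injective.ne hPQ) htan (by simpa using hlP)
    (by simpa using hlQ)

theorem circumcircle_family_product_of_cosines (a b : ℝ) (hb : 0 < b) (hab : b < a)
    (P₁ P₂ P₃ : EuclideanSpace ℝ (Fin 2))
    (hind : AffineIndependent ℝ ![P₁, P₂, P₃])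
    (hC₁ : dist P₁ 0 = a + b) (hC₂ : dist P₂ 0 = a + b) (hC₃ : dist P₃ 0 = a + b)
    (ht₁ : SideTangentToEllipse a b P₁ P₂)
    (ht₃ : SideTangentToEllipse a b P₃ P₁) :
    Real.cos (∠ P₂ P₁ P₃) * Real.cos (∠ P₁ P₂ P₃) * Real.cos (∠ P₁ P₃ P₂) =
      a * b / (2 * (a + b) ^ 2) := by
  have : Fact (Module.finrank ℝ (EuclideanSpace ℝ (Fin 2)) = 2) :=
    ⟨finrank_euclideanSpace_fin⟩
  rw [dist_zero_right] at hC₁ hC₂ hC₃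
  have h₁₂ : P₁ ≠ P₂ := hind.injective.ne (by decide : (0 : Fin 3) ≠ 1)
  have h₁₃ : P₁ ≠ P₃ := hind.injective.ne (by decide : (0 : Fin 3) ≠ 2)
  have h₂₃ : P₂ ≠ P₃ := hind.injective.ne (by decide : (1 : Fin 3) ≠ 2)
  set e := Complex.orthonormalBasisOneI.repr.symm
  have hS : ‖P₁ + P₂ + P₃‖ = a - b := by
    rw [← e.norm_map, map_add, map_add]
    refine Complex.norm_add_add_eq_sub_of_tangentChordPoly_eq_zero hb hab
      (by rwa [e.norm_map]) (by rwa [e.norm_map]) (by rwa [e.norm_map])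
      (ht₁.tangentChordPoly_eq_zero hC₁ hC₂ h₁₂) ?_ (e.injective.ne h₂₃)
    rw [tangentChordPoly_comm]
    exact ht₃.tangentChordPoly_eq_zero hC₃ hC₁ h₁₃.symm
  have euler := eight_mul_sq_mul_cos_mul_cos_mul_cos_of_norm_eq hC₁ hC₂ hC₃ h₁₂ h₁₃ h₂₃
  rw [hS] at euler
  rw [eq_div_iff (mul_pos two_pos (pow_pos (by linarith) 2)).ne']
  linear_combination euler / 4
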